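/- Under the block-primitivity assumption, setting a = (ε·m/M)^l ∈ (0,1), the exact and banded log-likelihoods satisfy the explicit bound |ℓ_T − ℓ̃_T| ≤ 2·T·(M/m)·(1 − a)^{⌊(k+1)/l⌋}. -/

import Mathlib

/-!
Write `K_t = Γ^(t) P_t`. Both `φ_{t-1}` and the truncated `φ̃_{t-1}` are normalisations of one
product of the `K_τ`, applied to the initial vectors `φ_{t_{b-1}}` and `ρ`, over at least `k` steps.
By primitivity, in each block of `l` consecutive `K_τ` every row dominates `a = (εm/M)^l` times
every other row. After a Doob h-transform towards the terminal weight, such a block acts on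
normalised vectors as a Markov matrix with a Doeblin minorisation of mass `a`, so every complete
block contracts the `ℓ¹` distance by `1 - a`, and `‖φ_{t-1} - φ̃_{t-1}‖₁ ≤ 2 (1 - a)^⌊k/l⌋`.
Since `φ Γ^(t) P_t 1ᵀ` is an average of numbers in `[m, M]`, its logarithm moves by at most
`(M - m) / (2m)` times that distance. The exponent `⌊(k+1)/l⌋` may exceed `⌊k/l⌋` by one; this is
paid for by `M - m ≤ 2M (1 - a)`, which holds because `a ≤ m / M`. Summing over the `(B - 2) k`
time steps of the truncated blocks gives the bound.
-/

open Finset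

/-- A probability (row) vector in `ℝ^N`. -/
def IsProbVec {N : ℕ} (v : Fin N → ℝ) : Prop :=
  (∀ i, 0 ≤ v i) ∧ ∑ i, v i = 1

/-- A row-stochastic `N × N` real matrix. -/
def IsRowStochastic {N : ℕ} (A : Matrix (Fin N) (Fin N) ℝ) : Prop :=
  (∀ i j, 0 ≤ A i j) ∧ ∀ i, ∑ j, A i j = 1

/-- Normalize a vector to sum one (dividing by the sum of its entries). -/
noncomputable def probNormalize {N : ℕ} (v : Fin N → ℝ) : Fin N → ℝ :=
  fun j => v j / ∑ i, v i

/-- The unnormalized forward update `v ↦ v Γ P` with `P = diag(w)`. -/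
def fwdVec {N : ℕ} (A : Matrix (Fin N) (Fin N) ℝ) (w : Fin N → ℝ) (v : Fin N → ℝ) :
    Fin N → ℝ :=
  fun j => (∑ i, v i * A i j) * w j

/-- `fwdRun Γ w start v n` is the scaled forward variable at time `start + n`
obtained by initializing the scaled forward recursion with vector `v` at time
`start` (each step from time `τ - 1` to `τ` uses `Γ τ` and weights `w τ`). -/
noncomputable def fwdRun {N : ℕ} (Γ : ℕ → Matrix (Fin N) (Fin N) ℝ)
    (w : ℕ → Fin N → ℝ) (start : ℕ) (v : Fin N → ℝ) : ℕ → Fin N → ℝ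
  | 0 => v
  | n + 1 =>
      probNormalize
        (fwdVec (Γ (start + n + 1)) (w (start + n + 1)) (fwdRun Γ w start v n))

/-- The scaled forward variable `φ_t` (for `t = 1, …, T`):
`φ_1 = δ P_1 / (δ P_1 1ᵀ)` and `φ_t = φ_{t-1} Γ^(t) P_t / (φ_{t-1} Γ^(t) P_t 1ᵀ)`. -/
noncomputable def phi {N : ℕ} (δ : Fin N → ℝ) (Γ : ℕ → Matrix (Fin N) (Fin N) ℝ)
    (w : ℕ → Fin N → ℝ) (t : ℕ) : Fin N → ℝ :=
  fwdRun Γ w 1 (probNormalize (fun j => δ j * w 1 j)) (t - 1)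

/-- The normalizing constant `v Γ^(t) P_t 1ᵀ`. -/
def contrib {N : ℕ} (Γ : ℕ → Matrix (Fin N) (Fin N) ℝ) (w : ℕ → Fin N → ℝ)
    (v : Fin N → ℝ) (t : ℕ) : ℝ :=
  ∑ j, (∑ i, v i * Γ t i j) * w t j

/-- The exact HMM log-likelihood
`ℓ_T = log (δ P_1 1ᵀ) + ∑_{t=2}^T log (φ_{t-1} Γ^(t) P_t 1ᵀ)`. -/
noncomputable def loglik {N : ℕ} (δ : Fin N → ℝ) (Γ : ℕ → Matrix (Fin N) (Fin N) ℝ)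
    (w : ℕ → Fin N → ℝ) (T : ℕ) : ℝ :=
  Real.log (∑ j, δ j * w 1 j)
    + ∑ t ∈ Finset.Icc 2 T, Real.log (contrib Γ w (phi δ Γ w (t - 1)) t)

/-- The banded (bandwidth-`k`) HMM log-likelihood: the first two blocks are exact,
and for blocks `b ≥ 3` the forward recursion is re-initialized with the fixed
probability vector `ρ` at time `t_{b-1} = (b-2)k`. -/
noncomputable def bandedLoglik {N : ℕ} (δ ρ : Fin N → ℝ)
    (Γ : ℕ → Matrix (Fin N) (Fin N) ℝ) (w : ℕ → Fin N → ℝ) (k B : ℕ) : ℝ :=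
  Real.log (∑ j, δ j * w 1 j)
    + ∑ t ∈ Finset.Icc 2 (2 * k), Real.log (contrib Γ w (phi δ Γ w (t - 1)) t)
    + ∑ b ∈ Finset.Icc 3 B, ∑ t ∈ Finset.Icc ((b - 1) * k + 1) (b * k),
        Real.log (contrib Γ w (fwdRun Γ w ((b - 2) * k) ρ (t - 1 - (b - 2) * k)) t)

/-- The product `Γ^(t) Γ^(t+1) ⋯ Γ^(t+l-1)` of `l` consecutive transition matrices. -/
noncomputable def matProd {N : ℕ} (Γ : ℕ → Matrix (Fin N) (Fin N) ℝ) (t l : ℕ) :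
    Matrix (Fin N) (Fin N) ℝ :=
  ((List.range l).map fun s => Γ (t + s)).prod

open Matrix

variable {N : ℕ}

theorem IsProbVec.dotProduct_pos {v c : Fin N → ℝ} (hv : IsProbVec v) (hc : ∀ i, 0 < c i) :
    0 < v ⬝ᵥ c := by
  obtain ⟨i, -, hi⟩ := exists_ne_zero_of_sum_ne_zero (hv.2 ▸ one_ne_zero : ∑ i, v i ≠ 0)
  exact sum_pos' (fun j _ => mul_nonneg (hv.1 j) (hc j).le)
    ⟨i, mem_univ i, mul_pos ((hv.1 i).lt_of_ne' hi) (hc i)⟩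

theorem IsProbVec.le_dotProduct {v c : Fin N → ℝ} {m : ℝ} (hv : IsProbVec v)
    (hc : ∀ i, m ≤ c i) : m ≤ v ⬝ᵥ c :=
  calc m = ∑ i, v i * m := by rw [← sum_mul, hv.2, one_mul]
    _ ≤ v ⬝ᵥ c := sum_le_sum fun i _ => mul_le_mul_of_nonneg_left (hc i) (hv.1 i)

theorem IsProbVec.dotProduct_le {v c : Fin N → ℝ} {M : ℝ} (hv : IsProbVec v)
    (hc : ∀ i, c i ≤ M) : v ⬝ᵥ c ≤ M :=
  calc v ⬝ᵥ c ≤ ∑ i, v i * M := sum_le_sum fun i _ => mul_le_mul_of_nonneg_left (hc i) (hv.1 i)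
    _ = M := by rw [← sum_mul, hv.2, one_mul]

theorem IsRowStochastic.mulVec_mem_Icc {P : Matrix (Fin N) (Fin N) ℝ} {d : Fin N → ℝ} {m M : ℝ}
    (hP : IsRowStochastic P) (hd : ∀ j, m ≤ d j ∧ d j ≤ M) (i : Fin N) :
    m ≤ (P *ᵥ d) i ∧ (P *ᵥ d) i ≤ M :=
  ⟨IsProbVec.le_dotProduct ⟨hP.1 i, hP.2 i⟩ fun j => (hd j).1,
    IsProbVec.dotProduct_le ⟨hP.1 i, hP.2 i⟩ fun j => (hd j).2⟩

theorem IsProbVec.sum_abs_sub_le_two {u v : Fin N → ℝ} (hu : IsProbVec u) (hv : IsProbVec v) :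
    ∑ i, |u i - v i| ≤ 2 :=
  calc ∑ i, |u i - v i| ≤ ∑ i, (u i + v i) := sum_le_sum fun i _ =>
        (abs_sub _ _).trans_eq (by rw [abs_of_nonneg (hu.1 i), abs_of_nonneg (hv.1 i)])
    _ = 2 := by rw [sum_add_distrib, hu.2, hv.2]; norm_num

theorem abs_dotProduct_sub_dotProduct_le {μ ν c : Fin N → ℝ} {m M : ℝ}
    (hμν : ∑ i, μ i = ∑ i, ν i) (hc : ∀ i, m ≤ c i ∧ c i ≤ M) :
    |μ ⬝ᵥ c - ν ⬝ᵥ c| ≤ (M - m) / 2 * ∑ i, |μ i - ν i| := by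
  -- centring `c` at `(m + M) / 2` changes nothing, since `μ - ν` has total mass zero
  have hcentre : μ ⬝ᵥ c - ν ⬝ᵥ c = ∑ i, (μ i - ν i) * (c i - (m + M) / 2) := by
    simp only [dotProduct, mul_sub, sub_mul, sum_sub_distrib, ← sum_mul, hμν]
    ring
  rw [hcentre, mul_sum]
  refine (abs_sum_le_sum_abs _ _).trans (sum_le_sum fun i _ => ?_)
  rw [abs_mul, mul_comm]
  gcongr
  exact abs_le.2 ⟨by linarith [(hc i).1], by linarith [(hc i).2]⟩

theorem probNormalize_eq_smul (v : Fin N → ℝ) : probNormalize v = (∑ i, v i)⁻¹ • v := by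
  ext j
  simp [probNormalize, div_eq_inv_mul]

theorem sum_probNormalize {v : Fin N → ℝ} (h : ∑ i, v i ≠ 0) : ∑ j, probNormalize v j = 1 := by
  simp only [probNormalize, ← sum_div, div_self h]

theorem isProbVec_probNormalize {v : Fin N → ℝ} (h0 : ∀ i, 0 ≤ v i) (h : 0 < ∑ i, v i) :
    IsProbVec (probNormalize v) :=
  ⟨fun j => div_nonneg (h0 j) h.le, sum_probNormalize h.ne'⟩

theorem probNormalize_of_sum_eq_one {v : Fin N → ℝ} (h : ∑ i, v i = 1) : probNormalize v = v := by
  rw [probNormalize_eq_smul, h, inv_one, one_smul]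

theorem probNormalize_smul {c : ℝ} (hc : c ≠ 0) (v : Fin N → ℝ) :
    probNormalize (c • v) = probNormalize v := by
  ext j
  simp only [probNormalize, Pi.smul_apply, smul_eq_mul, ← mul_sum]
  exact mul_div_mul_left _ _ hc

theorem probNormalize_vecMul {H : Matrix (Fin N) (Fin N) ℝ} (hH : ∀ i, ∑ j, H i j = 1)
    (y : Fin N → ℝ) : probNormalize (y ᵥ* H) = probNormalize y ᵥ* H := by
  have hsum : ∑ j, (y ᵥ* H) j = ∑ i, y i := by
    have hH1 : H *ᵥ 1 = 1 := funext fun i => by simp [mulVec, dotProduct, hH i]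
    rw [← dotProduct_one, ← dotProduct_mulVec, hH1, dotProduct_one]
  rw [probNormalize_eq_smul, probNormalize_eq_smul, smul_vecMul, hsum]

theorem sum_abs_vecMul_le_of_minorization {a : ℝ} {H : Matrix (Fin N) (Fin N) ℝ}
    {π d : Fin N → ℝ} (hH : ∀ i j, a * π j ≤ H i j) (hrow : ∀ i, ∑ j, H i j = 1)
    (hπ : ∑ j, π j = 1) (hd : ∑ i, d i = 0) :
    ∑ j, |(d ᵥ* H) j| ≤ (1 - a) * ∑ i, |d i| := by
  have hcol : ∀ j, (d ᵥ* H) j = ∑ i, d i * (H i j - a * π j) := fun j => by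
    simp only [vecMul, dotProduct, mul_sub, sum_sub_distrib, ← sum_mul, hd, zero_mul, sub_zero]
  calc ∑ j, |(d ᵥ* H) j| ≤ ∑ j, ∑ i, |d i| * (H i j - a * π j) := by
        refine sum_le_sum fun j _ => ?_
        rw [hcol]
        refine (abs_sum_le_sum_abs _ _).trans_eq (sum_congr rfl fun i _ => ?_)
        rw [abs_mul, abs_of_nonneg (sub_nonneg.2 (hH i j))]
    _ = (1 - a) * ∑ i, |d i| := by
        rw [sum_comm, mul_sum]
        refine sum_congr rfl fun i _ => ?_
        rw [← mul_sum, sum_sub_distrib, ← mul_sum, hrow, hπ]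
        ring

section HTransform

variable {D : Matrix (Fin N) (Fin N) ℝ} {β : Fin N → ℝ}

noncomputable def hTransform (D : Matrix (Fin N) (Fin N) ℝ) (β : Fin N → ℝ) :
    Matrix (Fin N) (Fin N) ℝ :=
  fun i j => D i j * β j / (D *ᵥ β) i

theorem sum_hTransform_row (hg : ∀ i, (D *ᵥ β) i ≠ 0) (i : Fin N) :
    ∑ j, hTransform D β i j = 1 := by
  simp only [hTransform, ← sum_div]
  exact div_self (hg i)

theorem vecMul_mul_eq_vecMul_hTransform (hg : ∀ i, (D *ᵥ β) i ≠ 0) (x : Fin N → ℝ) :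
    (x ᵥ* D) * β = (x * (D *ᵥ β)) ᵥ* hTransform D β := by
  ext j
  simp only [Pi.mul_apply, vecMul, dotProduct, hTransform, sum_mul]
  refine sum_congr rfl fun i _ => ?_
  field_simp [hg i]

theorem hTransform_minorization {a : ℝ} (hD : ∀ i j, 0 ≤ D i j)
    (hmin : ∀ i i' j, a * D i' j ≤ D i j) (hβ : ∀ j, 0 ≤ β j) (hg : ∀ i, 0 < (D *ᵥ β) i)
    {i₀ : Fin N} (hi₀ : ∀ i, (D *ᵥ β) i ≤ (D *ᵥ β) i₀) (i j : Fin N) :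
    a * hTransform D β i₀ j ≤ hTransform D β i j :=
  calc a * hTransform D β i₀ j = a * D i₀ j * β j / (D *ᵥ β) i₀ := by
        rw [hTransform, mul_div_assoc', mul_assoc]
    _ ≤ D i j * β j / (D *ᵥ β) i₀ := by gcongr; exacts [(hg i₀).le, hβ j, hmin i i₀ j]
    _ ≤ hTransform D β i j :=
        div_le_div_of_nonneg_left (mul_nonneg (hD i j) (hβ j)) (hg i) (hi₀ i)

theorem mulVec_pos_of_pos (hD : ∀ i j, 0 < D i j) (hβ : ∀ j, 0 < β j) (i : Fin N) :
    0 < (D *ᵥ β) i :=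
  sum_pos (fun j _ => mul_pos (hD i j) (hβ j)) ⟨i, mem_univ i⟩

-- normalised steps through `D` with terminal weight `β` are Markov steps through the
-- h-transform, whose rows all dominate `a` times its row at the largest entry of `D *ᵥ β`
theorem sum_abs_probNormalize_vecMul_sub_le {a : ℝ} (hD : ∀ i j, 0 < D i j)
    (hmin : ∀ i i' j, a * D i' j ≤ D i j) (hβ : ∀ j, 0 < β j) {x y : Fin N → ℝ}
    (hx : ∑ i, (x * (D *ᵥ β)) i ≠ 0) (hy : ∑ i, (y * (D *ᵥ β)) i ≠ 0) :
    ∑ j, |probNormalize ((x ᵥ* D) * β) j - probNormalize ((y ᵥ* D) * β) j|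
      ≤ (1 - a) * ∑ i, |probNormalize (x * (D *ᵥ β)) i - probNormalize (y * (D *ᵥ β)) i| := by
  have hg := mulVec_pos_of_pos hD hβ
  have hrow := sum_hTransform_row fun i => (hg i).ne'
  obtain ⟨i, -, -⟩ := exists_ne_zero_of_sum_ne_zero hx
  obtain ⟨i₀, -, hi₀⟩ := exists_max_image univ (D *ᵥ β) ⟨i, mem_univ i⟩
  rw [vecMul_mul_eq_vecMul_hTransform (fun i => (hg i).ne'),
    vecMul_mul_eq_vecMul_hTransform (fun i => (hg i).ne'), probNormalize_vecMul hrow,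
    probNormalize_vecMul hrow]
  set p := probNormalize (x * (D *ᵥ β))
  set q := probNormalize (y * (D *ᵥ β))
  calc ∑ j, |(p ᵥ* hTransform D β) j - (q ᵥ* hTransform D β) j|
      = ∑ j, |((p - q) ᵥ* hTransform D β) j| := by simp only [sub_vecMul, Pi.sub_apply]
    _ ≤ (1 - a) * ∑ i, |(p - q) i| :=
        sum_abs_vecMul_le_of_minorization
          (hTransform_minorization (fun i j => (hD i j).le) hmin (fun j => (hβ j).le) hg
            (fun i => hi₀ i (mem_univ i))) hrow (hrow i₀)
          (by simp only [Pi.sub_apply]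
              rw [sum_sub_distrib, sum_probNormalize hx, sum_probNormalize hy, sub_self])

end HTransform

section MatProd

variable {A B : ℕ → Matrix (Fin N) (Fin N) ℝ} {t n : ℕ}

theorem matProd_zero (A : ℕ → Matrix (Fin N) (Fin N) ℝ) (t : ℕ) : matProd A t 0 = 1 := rfl

theorem matProd_succ (A : ℕ → Matrix (Fin N) (Fin N) ℝ) (t n : ℕ) :
    matProd A t (n + 1) = matProd A t n * A (t + n) := by
  simp [matProd, List.range_succ]

theorem matProd_add (A : ℕ → Matrix (Fin N) (Fin N) ℝ) (t p q : ℕ) :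
    matProd A t (p + q) = matProd A t p * matProd A (t + p) q := by
  induction q with
  | zero => rw [add_zero, matProd_zero, mul_one]
  | succ q ih => rw [← add_assoc, matProd_succ, ih, matProd_succ, mul_assoc, add_assoc]

theorem matProd_mul_eq_matProd_blocks (A : ℕ → Matrix (Fin N) (Fin N) ℝ) (p l r : ℕ) :
    matProd A p (r * l) = matProd (fun q => matProd A (p + q * l) l) 0 r := by
  induction r with
  | zero => rw [zero_mul, matProd_zero, matProd_zero]
  | succ r ih => rw [add_one_mul, matProd_add, ih, matProd_succ, zero_add]

theorem isRowStochastic_iff_mem_rowStochastic {P : Matrix (Fin N) (Fin N) ℝ} :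
    IsRowStochastic P ↔ P ∈ rowStochastic ℝ (Fin N) :=
  mem_rowStochastic_iff_sum.symm

theorem IsRowStochastic.apply_le_one {P : Matrix (Fin N) (Fin N) ℝ} (hP : IsRowStochastic P)
    (i j : Fin N) : P i j ≤ 1 :=
  le_one_of_mem_rowStochastic (isRowStochastic_iff_mem_rowStochastic.1 hP)

theorem isRowStochastic_matProd (h : ∀ s < n, IsRowStochastic (A (t + s))) :
    IsRowStochastic (matProd A t n) := by
  rw [isRowStochastic_iff_mem_rowStochastic]
  refine Submonoid.list_prod_mem _ fun P hP => ?_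
  obtain ⟨s, hs, rfl⟩ := List.mem_map.1 hP
  exact isRowStochastic_iff_mem_rowStochastic.1 (h s (List.mem_range.1 hs))

theorem matProd_smul (c : ℝ) (A : ℕ → Matrix (Fin N) (Fin N) ℝ) (t n : ℕ) :
    matProd (fun s => c • A s) t n = c ^ n • matProd A t n := by
  induction n with
  | zero => rw [matProd_zero, matProd_zero, pow_zero, one_smul]
  | succ n ih => rw [matProd_succ, matProd_succ, ih, smul_mul_smul_comm, pow_succ]

theorem matProd_mono (h : ∀ s < n, ∀ i j, 0 ≤ A (t + s) i j ∧ A (t + s) i j ≤ B (t + s) i j)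
    (i j : Fin N) : 0 ≤ matProd A t n i j ∧ matProd A t n i j ≤ matProd B t n i j := by
  induction n generalizing i j with
  | zero =>
    rw [matProd_zero, matProd_zero]
    exact ⟨by rw [one_apply]; split_ifs <;> norm_num, le_rfl⟩
  | succ n ih =>
    have ih := ih fun s hs => h s (by omega)
    have hn := h n (by omega)
    rw [matProd_succ, matProd_succ, mul_apply, mul_apply]
    exact ⟨sum_nonneg fun k _ => mul_nonneg (ih i k).1 (hn k j).1,
      sum_le_sum fun k _ => mul_le_mul (ih i k).2 (hn k j).2 (hn k j).1
        ((ih i k).1.trans (ih i k).2)⟩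

theorem matProd_mulVec_pos (h : ∀ s < n, ∀ i j, 0 < A (t + s) i j) {β : Fin N → ℝ}
    (hβ : ∀ j, 0 < β j) (i : Fin N) : 0 < (matProd A t n *ᵥ β) i := by
  induction n generalizing β with
  | zero => rw [matProd_zero, one_mulVec]; exact hβ i
  | succ n ih =>
    rw [matProd_succ, ← mulVec_mulVec]
    exact ih (fun s hs => h s (by omega)) (mulVec_pos_of_pos (h n (by omega)) hβ)

-- the induction peels off the last block and replaces `β` by `D (t + r) *ᵥ β`
theorem sum_abs_probNormalize_vecMul_matProd_sub_le {a : ℝ} (ha : a ≤ 1)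
    {D : ℕ → Matrix (Fin N) (Fin N) ℝ} {r : ℕ}
    (hD : ∀ s < r, (∀ i j, 0 < D (t + s) i j) ∧ ∀ i i' j, a * D (t + s) i' j ≤ D (t + s) i j)
    {u v β : Fin N → ℝ} (hu : IsProbVec u) (hv : IsProbVec v) (hβ : ∀ j, 0 < β j) :
    ∑ j, |probNormalize ((u ᵥ* matProd D t r) * β) j
        - probNormalize ((v ᵥ* matProd D t r) * β) j| ≤ 2 * (1 - a) ^ r := by
  induction r generalizing β with
  | zero =>
    have hprob : ∀ x, IsProbVec x → IsProbVec (probNormalize (x * β)) := fun x hx =>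
      isProbVec_probNormalize (fun j => mul_nonneg (hx.1 j) (hβ j).le) (hx.dotProduct_pos hβ)
    simpa [matProd_zero] using (hprob u hu).sum_abs_sub_le_two (hprob v hv)
  | succ r ih =>
    obtain ⟨hpos, hmin⟩ := hD r (by omega)
    have hD' : ∀ s < r, _ := fun s hs => hD s (by omega)
    have hg := mulVec_pos_of_pos hpos hβ
    have hsum : ∀ x, IsProbVec x → ∑ i, ((x ᵥ* matProd D t r) * (D (t + r) *ᵥ β)) i ≠ 0 :=
      fun x hx => by
        change (x ᵥ* matProd D t r) ⬝ᵥ (D (t + r) *ᵥ β) ≠ 0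
        rw [← dotProduct_mulVec]
        exact (hx.dotProduct_pos (matProd_mulVec_pos (fun s hs => (hD' s hs).1) hg)).ne'
    rw [matProd_succ, ← vecMul_vecMul, ← vecMul_vecMul]
    calc _ ≤ (1 - a) * ∑ i, |probNormalize ((u ᵥ* matProd D t r) * (D (t + r) *ᵥ β)) i
            - probNormalize ((v ᵥ* matProd D t r) * (D (t + r) *ᵥ β)) i| :=
          sum_abs_probNormalize_vecMul_sub_le hpos hmin hβ (hsum u hu) (hsum v hv)
      _ ≤ (1 - a) * (2 * (1 - a) ^ r) := mul_le_mul_of_nonneg_left (ih hD' hg) (sub_nonneg.2 ha)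
      _ = 2 * (1 - a) ^ (r + 1) := by ring

end MatProd

section ForwardFilter

variable {Γ : ℕ → Matrix (Fin N) (Fin N) ℝ} {w : ℕ → Fin N → ℝ}

noncomputable def fwdMat (Γ : ℕ → Matrix (Fin N) (Fin N) ℝ) (w : ℕ → Fin N → ℝ) (t : ℕ) :
    Matrix (Fin N) (Fin N) ℝ :=
  Γ t * diagonal (w t)

theorem fwdVec_eq_vecMul_fwdMat (Γ : ℕ → Matrix (Fin N) (Fin N) ℝ) (w : ℕ → Fin N → ℝ)
    (t : ℕ) (v : Fin N → ℝ) : fwdVec (Γ t) (w t) v = v ᵥ* fwdMat Γ w t := by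
  ext j
  rw [fwdMat, ← vecMul_vecMul, vecMul_diagonal]
  rfl

theorem contrib_eq_dotProduct (Γ : ℕ → Matrix (Fin N) (Fin N) ℝ) (w : ℕ → Fin N → ℝ)
    (v : Fin N → ℝ) (t : ℕ) : contrib Γ w v t = v ⬝ᵥ (Γ t *ᵥ w t) := by
  rw [dotProduct_mulVec]
  rfl

theorem fwdRun_add (Γ : ℕ → Matrix (Fin N) (Fin N) ℝ) (w : ℕ → Fin N → ℝ) (s : ℕ)
    (v : Fin N → ℝ) (n q : ℕ) :
    fwdRun Γ w s v (n + q) = fwdRun Γ w (s + n) (fwdRun Γ w s v n) q := by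
  induction q with
  | zero => rfl
  | succ q ih => rw [← add_assoc, fwdRun, fwdRun, ih, ← add_assoc s n q]

theorem isProbVec_fwdRun {s n : ℕ} {v : Fin N → ℝ} (hv : IsProbVec v)
    (h : ∀ τ, s < τ → τ ≤ s + n → IsRowStochastic (Γ τ) ∧ ∀ j, 0 < w τ j) :
    IsProbVec (fwdRun Γ w s v n) := by
  induction n with
  | zero => exact hv
  | succ n ih =>
    have hφ := ih fun τ h₁ h₂ => h τ h₁ (by omega)
    obtain ⟨hΓ, hw⟩ := h (s + n + 1) (by omega) (by omega)
    refine isProbVec_probNormalize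
      (fun j => mul_nonneg (sum_nonneg fun i _ => mul_nonneg (hφ.1 i) (hΓ.1 i j)) (hw j).le) ?_
    change 0 < contrib Γ w _ (s + n + 1)
    rw [contrib_eq_dotProduct]
    exact hφ.dotProduct_pos fun i => IsProbVec.dotProduct_pos ⟨hΓ.1 i, hΓ.2 i⟩ hw

theorem fwdRun_eq_probNormalize_vecMul_matProd {s n : ℕ} {v : Fin N → ℝ} (hv : IsProbVec v)
    (h : ∀ τ, s < τ → τ ≤ s + n → IsRowStochastic (Γ τ) ∧ ∀ j, 0 < w τ j) :
    fwdRun Γ w s v n = probNormalize (v ᵥ* matProd (fwdMat Γ w) (s + 1) n) := by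
  induction n with
  | zero => rw [matProd_zero, vecMul_one, probNormalize_of_sum_eq_one hv.2]; rfl
  | succ n ih =>
    have h' : ∀ τ, s < τ → τ ≤ s + n → _ := fun τ h₁ h₂ => h τ h₁ (by omega)
    have hsum : ∑ i, (v ᵥ* matProd (fwdMat Γ w) (s + 1) n) i ≠ 0 := fun h0 => by
      have h1 := (isProbVec_fwdRun hv h').2
      rw [ih h'] at h1
      simp [probNormalize, h0] at h1
    rw [fwdRun, fwdVec_eq_vecMul_fwdMat, ih h', probNormalize_eq_smul (v ᵥ* _), smul_vecMul,
      probNormalize_smul (inv_ne_zero hsum), vecMul_vecMul, add_right_comm, ← matProd_succ]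

theorem phi_eq_fwdRun (δ : Fin N → ℝ) (Γ : ℕ → Matrix (Fin N) (Fin N) ℝ) (w : ℕ → Fin N → ℝ)
    {s t : ℕ} (hs : 1 ≤ s) (hst : s ≤ t) :
    phi δ Γ w t = fwdRun Γ w s (phi δ Γ w s) (t - s) := by
  rw [phi, phi, show t - 1 = s - 1 + (t - s) by omega, fwdRun_add, Nat.add_sub_cancel' hs]

theorem isProbVec_phi {δ : Fin N → ℝ} {t : ℕ} (hδ : IsProbVec δ) (hw₁ : ∀ j, 0 < w 1 j)
    (h : ∀ τ, 1 < τ → τ ≤ t → IsRowStochastic (Γ τ) ∧ ∀ j, 0 < w τ j) :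
    IsProbVec (phi δ Γ w t) :=
  isProbVec_fwdRun
    (isProbVec_probNormalize (fun j => mul_nonneg (hδ.1 j) (hw₁ j).le) (hδ.dotProduct_pos hw₁))
    fun τ h₁ h₂ => h τ h₁ (by omega)

end ForwardFilter

section Mixing

variable {Γ : ℕ → Matrix (Fin N) (Fin N) ℝ} {w : ℕ → Fin N → ℝ} {ε m M : ℝ} {l t : ℕ}

theorem matProd_fwdMat_mem_Icc (hm : 0 ≤ m) {n : ℕ} (hΓ : ∀ s < n, ∀ i j, 0 ≤ Γ (t + s) i j)
    (hw : ∀ s < n, ∀ j, m ≤ w (t + s) j ∧ w (t + s) j ≤ M) (i j : Fin N) :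
    m ^ n * matProd Γ t n i j ≤ matProd (fwdMat Γ w) t n i j ∧
      matProd (fwdMat Γ w) t n i j ≤ M ^ n * matProd Γ t n i j := by
  have lower := matProd_mono (A := fun s => m • Γ s) (B := fwdMat Γ w) (fun s hs i j => by
    simp only [fwdMat, mul_diagonal, Matrix.smul_apply, smul_eq_mul, mul_comm m]
    exact ⟨mul_nonneg (hΓ s hs i j) hm,
      mul_le_mul_of_nonneg_left (hw s hs j).1 (hΓ s hs i j)⟩) i j
  have upper := matProd_mono (A := fwdMat Γ w) (B := fun s => M • Γ s) (fun s hs i j => by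
    simp only [fwdMat, mul_diagonal, Matrix.smul_apply, smul_eq_mul, mul_comm M]
    exact ⟨mul_nonneg (hΓ s hs i j) (hm.trans (hw s hs j).1),
      mul_le_mul_of_nonneg_left (hw s hs j).2 (hΓ s hs i j)⟩) i j
  rw [matProd_smul, Matrix.smul_apply, smul_eq_mul] at lower upper
  exact ⟨lower.2, upper.2⟩

theorem le_one_of_le_matProd (hΓ : ∀ s < l, IsRowStochastic (Γ (t + s))) {i j : Fin N}
    (h : ε ≤ matProd Γ t l i j) : ε ≤ 1 :=
  h.trans ((isRowStochastic_matProd hΓ).apply_le_one i j)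

-- entrywise `m ^ l Π ≤ (block) ≤ M ^ l Π`, where the stochastic product `Π` has entries in `[ε, 1]`
theorem matProd_fwdMat_pos_and_minorization (hε : 0 < ε) (hm : 0 < m) (hl : l ≠ 0)
    (hΓ : ∀ s < l, IsRowStochastic (Γ (t + s)))
    (hw : ∀ s < l, ∀ j, m ≤ w (t + s) j ∧ w (t + s) j ≤ M)
    (hprim : ∀ i j, ε ≤ matProd Γ t l i j) :
    (∀ i j, 0 < matProd (fwdMat Γ w) t l i j) ∧
      ∀ i i' j, (ε * m / M) ^ l * matProd (fwdMat Γ w) t l i' j ≤ matProd (fwdMat Γ w) t l i j := by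
  have hP := isRowStochastic_matProd hΓ
  have hb := matProd_fwdMat_mem_Icc hm.le (fun s hs => (hΓ s hs).1) hw
  have hlow : ∀ i j, ε * m ^ l ≤ matProd (fwdMat Γ w) t l i j := fun i j =>
    calc ε * m ^ l ≤ m ^ l * matProd Γ t l i j := by
          rw [mul_comm]; exact mul_le_mul_of_nonneg_left (hprim i j) (by positivity)
      _ ≤ _ := (hb i j).1
  refine ⟨fun i j => (by positivity : 0 < ε * m ^ l).trans_le (hlow i j), fun i i' j => ?_⟩
  have hε₁ : ε ≤ 1 := le_one_of_le_matProd hΓ (hprim i j)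
  have hw₀ := hw 0 (Nat.pos_of_ne_zero hl) j
  have hM : 0 < M := hm.trans_le (hw₀.1.trans hw₀.2)
  calc (ε * m / M) ^ l * matProd (fwdMat Γ w) t l i' j ≤ (ε * m / M) ^ l * (M ^ l * 1) := by
        gcongr
        exact (hb i' j).2.trans (mul_le_mul_of_nonneg_left (hP.apply_le_one i' j) (by positivity))
    _ = ε ^ l * m ^ l := by rw [mul_one, ← mul_pow, div_mul_cancel₀ _ hM.ne', mul_pow]
    _ ≤ ε * m ^ l := by gcongr; exact pow_le_of_le_one hε.le hε₁ hl
    _ ≤ _ := hlow i j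

-- the first `n - r l` steps are absorbed into the initial vectors; the last `r` blocks contract
theorem sum_abs_fwdRun_sub_fwdRun_le {r s n : ℕ} (hε : 0 < ε) (hm : 0 < m) (hl : l ≠ 0)
    (ha : (ε * m / M) ^ l ≤ 1) (hrl : r * l ≤ n)
    (hwin : ∀ τ, s < τ → τ ≤ s + n → IsRowStochastic (Γ τ) ∧ ∀ j, m ≤ w τ j ∧ w τ j ≤ M)
    (hprim : ∀ τ, s < τ → τ + l ≤ s + n + 1 → ∀ i j, ε ≤ matProd Γ τ l i j)
    {u v : Fin N → ℝ} (hu : IsProbVec u) (hv : IsProbVec v) :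
    ∑ j, |fwdRun Γ w s u n j - fwdRun Γ w s v n j| ≤ 2 * (1 - (ε * m / M) ^ l) ^ r := by
  obtain ⟨n₀, rfl⟩ : ∃ n₀, n = n₀ + r * l := ⟨n - r * l, by omega⟩
  have hpos : ∀ τ, s < τ → τ ≤ s + (n₀ + r * l) → IsRowStochastic (Γ τ) ∧ ∀ j, 0 < w τ j :=
    fun τ h₁ h₂ => ⟨(hwin τ h₁ h₂).1, fun j => hm.trans_le ((hwin τ h₁ h₂).2 j).1⟩
  have hprob : ∀ x, IsProbVec x → IsProbVec (fwdRun Γ w s x n₀) := fun x hx =>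
    isProbVec_fwdRun hx fun τ h₁ h₂ => hpos τ h₁ (by omega)
  have hblock : ∀ q < r, ∀ s' < l, s < s + n₀ + 1 + q * l + s' ∧
      s + n₀ + 1 + q * l + s' ≤ s + (n₀ + r * l) := fun q hq s' hs' => by
    have : q * l + l ≤ r * l := by rw [← add_one_mul]; exact Nat.mul_le_mul_right l hq
    omega
  have hpos₀ : ∀ τ, s + n₀ < τ → τ ≤ s + n₀ + r * l → _ :=
    fun τ h₁ h₂ => hpos τ (by omega) (by omega)
  rw [fwdRun_add, fwdRun_add, fwdRun_eq_probNormalize_vecMul_matProd (hprob u hu) hpos₀,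
    fwdRun_eq_probNormalize_vecMul_matProd (hprob v hv) hpos₀, matProd_mul_eq_matProd_blocks]
  simpa only [mul_one] using sum_abs_probNormalize_vecMul_matProd_sub_le ha (t := 0) (β := 1)
    (D := fun q => matProd (fwdMat Γ w) (s + n₀ + 1 + q * l) l)
    (fun q hq => by
      rw [zero_add]
      refine matProd_fwdMat_pos_and_minorization hε hm hl
        (fun s' hs' => (hwin _ (hblock q hq s' hs').1 (hblock q hq s' hs').2).1)
        (fun s' hs' => (hwin _ (hblock q hq s' hs').1 (hblock q hq s' hs').2).2)
        (hprim _ (by omega) (by have := hblock q hq (l - 1) (by omega); omega)))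
    (hprob u hu) (hprob v hv) (fun _ => one_pos)

end Mixing

theorem abs_log_sub_log_le {m x y : ℝ} (hm : 0 < m) (hx : m ≤ x) (hy : m ≤ y) :
    |Real.log x - Real.log y| ≤ |x - y| / m := by
  wlog hxy : y ≤ x generalizing x y
  · rw [abs_sub_comm, abs_sub_comm x]
    exact this hy hx (le_of_not_ge hxy)
  have hy₀ : 0 < y := hm.trans_le hy
  have hx₀ : 0 < x := hm.trans_le hx
  rw [abs_of_nonneg (sub_nonneg.2 (Real.log_le_log hy₀ hxy)), abs_of_nonneg (sub_nonneg.2 hxy)]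
  calc Real.log x - Real.log y = Real.log (x / y) := (Real.log_div hx₀.ne' hy₀.ne').symm
    _ ≤ x / y - 1 := Real.log_le_sub_one_of_pos (by positivity)
    _ = (x - y) / y := by field_simp
    _ ≤ (x - y) / m := div_le_div_of_nonneg_left (sub_nonneg.2 hxy) hm hy

theorem abs_log_contrib_sub_log_contrib_le {Γ : ℕ → Matrix (Fin N) (Fin N) ℝ}
    {w : ℕ → Fin N → ℝ} {m M : ℝ} {t : ℕ} {μ ν : Fin N → ℝ} (hm : 0 < m)
    (hΓ : IsRowStochastic (Γ t)) (hw : ∀ j, m ≤ w t j ∧ w t j ≤ M)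
    (hμ : IsProbVec μ) (hν : IsProbVec ν) :
    |Real.log (contrib Γ w μ t) - Real.log (contrib Γ w ν t)|
      ≤ (M - m) / (2 * m) * ∑ i, |μ i - ν i| := by
  have hc := hΓ.mulVec_mem_Icc hw
  rw [contrib_eq_dotProduct, contrib_eq_dotProduct]
  calc _ ≤ |μ ⬝ᵥ (Γ t *ᵥ w t) - ν ⬝ᵥ (Γ t *ᵥ w t)| / m :=
        abs_log_sub_log_le hm (hμ.le_dotProduct fun i => (hc i).1)
          (hν.le_dotProduct fun i => (hc i).1)
    _ ≤ ((M - m) / 2 * ∑ i, |μ i - ν i|) / m := by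
        gcongr
        exact abs_dotProduct_sub_dotProduct_le (hμ.2.trans hν.2.symm) hc
    _ = _ := by field_simp

theorem abs_log_contrib_phi_sub_log_contrib_fwdRun_le {T l r s t : ℕ} {ε m M : ℝ}
    {δ ρ : Fin N → ℝ} {Γ : ℕ → Matrix (Fin N) (Fin N) ℝ} {w : ℕ → Fin N → ℝ}
    (hδ : IsProbVec δ) (hρ : IsProbVec ρ) (hε : 0 < ε) (hm : 0 < m) (hmM : m ≤ M) (hl : l ≠ 0)
    (ha : (ε * m / M) ^ l ≤ 1)
    (hΓ : ∀ t, 2 ≤ t → t ≤ T → IsRowStochastic (Γ t))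
    (hw : ∀ t j, 1 ≤ t → t ≤ T → m ≤ w t j ∧ w t j ≤ M)
    (hprim : ∀ t, 2 ≤ t → t + l - 1 ≤ T → ∀ i j, ε ≤ matProd Γ t l i j)
    (hs : 1 ≤ s) (hrl : s + r * l < t) (htT : t ≤ T) :
    |Real.log (contrib Γ w (phi δ Γ w (t - 1)) t)
        - Real.log (contrib Γ w (fwdRun Γ w s ρ (t - 1 - s)) t)|
      ≤ (M - m) / m * (1 - (ε * m / M) ^ l) ^ r := by
  have hwin : ∀ τ, 1 < τ → τ ≤ T → IsRowStochastic (Γ τ) ∧ ∀ j, m ≤ w τ j ∧ w τ j ≤ M :=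
    fun τ h₁ h₂ => ⟨hΓ τ h₁ h₂, fun j => hw τ j (by omega) h₂⟩
  have hpos : ∀ τ, 1 < τ → τ ≤ T → IsRowStochastic (Γ τ) ∧ ∀ j, 0 < w τ j :=
    fun τ h₁ h₂ => ⟨hΓ τ h₁ h₂, fun j => hm.trans_le (hw τ j (by omega) h₂).1⟩
  have hφ : IsProbVec (phi δ Γ w s) :=
    isProbVec_phi hδ (fun j => hm.trans_le (hw 1 j le_rfl (by omega)).1)
      fun τ h₁ h₂ => hpos τ h₁ (by omega)
  rw [phi_eq_fwdRun δ Γ w hs (by omega : s ≤ t - 1)]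
  have hdist := sum_abs_fwdRun_sub_fwdRun_le (s := s) hε hm hl ha (by omega : r * l ≤ t - 1 - s)
    (fun τ h₁ h₂ => hwin τ (by omega) (by omega))
    (fun τ h₁ h₂ => hprim τ (by omega) (by omega)) hφ hρ
  calc _ ≤ (M - m) / (2 * m) * ∑ i, |fwdRun Γ w s (phi δ Γ w s) (t - 1 - s) i
          - fwdRun Γ w s ρ (t - 1 - s) i| :=
        abs_log_contrib_sub_log_contrib_le hm (hΓ t (by omega) htT)
          (fun j => hw t j (by omega) htT)
          (isProbVec_fwdRun hφ fun τ h₁ h₂ => hpos τ (by omega) (by omega))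
          (isProbVec_fwdRun hρ fun τ h₁ h₂ => hpos τ (by omega) (by omega))
    _ ≤ (M - m) / (2 * m) * (2 * (1 - (ε * m / M) ^ l) ^ r) :=
        mul_le_mul_of_nonneg_left hdist (div_nonneg (sub_nonneg.2 hmM) (by positivity))
    _ = _ := by field_simp

theorem sum_Ioc_mul_eq_sum_sum_Ioc {α : Type*} [AddCommMonoid α] (f : ℕ → α) (k c : ℕ) {B : ℕ}
    (hcB : c ≤ B) :
    ∑ t ∈ Ioc (c * k) (B * k), f t = ∑ b ∈ Ioc c B, ∑ t ∈ Ioc ((b - 1) * k) (b * k), f t := by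
  induction B, hcB using Nat.le_induction with
  | base => simp
  | succ B hcB ih =>
    rw [← sum_Ioc_consecutive _ (Nat.mul_le_mul_right k hcB) (Nat.mul_le_mul_right k B.le_succ),
      ih, sum_Ioc_succ_top hcB, Nat.add_sub_cancel]

theorem loglik_sub_bandedLoglik (δ ρ : Fin N → ℝ) (Γ : ℕ → Matrix (Fin N) (Fin N) ℝ)
    (w : ℕ → Fin N → ℝ) {k B : ℕ} (hk : 1 ≤ k) (hB : 2 ≤ B) :
    loglik δ Γ w (B * k) - bandedLoglik δ ρ Γ w k B
      = ∑ b ∈ Icc 3 B, ∑ t ∈ Ioc ((b - 1) * k) (b * k),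
          (Real.log (contrib Γ w (phi δ Γ w (t - 1)) t)
            - Real.log (contrib Γ w (fwdRun Γ w ((b - 2) * k) ρ (t - 1 - (b - 2) * k)) t)) := by
  have hIcc : ∀ c d : ℕ, Icc (c + 1) d = Ioc c d := Icc_add_one_left_eq_Ioc
  simp only [loglik, bandedLoglik, hIcc, sum_sub_distrib]
  rw [← sum_Ioc_consecutive _ (by omega : 1 ≤ 2 * k)
    (Nat.mul_le_mul_right k hB), sum_Ioc_mul_eq_sum_sum_Ioc _ k 2 hB]
  ring

theorem sub_div_mul_one_sub_pow_le {ε m M : ℝ} {k l : ℕ} (hε₀ : 0 ≤ ε) (hm : 0 < m)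
    (hmM : m ≤ M) (hl : l ≠ 0) (hε₁ : l ≤ k + 1 → ε ≤ 1) :
    (M - m) / m * (1 - (ε * m / M) ^ l) ^ (k / l)
      ≤ 2 * (M / m) * (1 - (ε * m / M) ^ l) ^ ((k + 1) / l) := by
  obtain hkl | hlk := lt_or_ge (k + 1) l
  · rw [Nat.div_eq_of_lt hkl, Nat.div_eq_of_lt (by omega), pow_zero, mul_one, mul_one,
      mul_div_assoc', div_le_div_iff_of_pos_right hm]
    linarith
  have hM : 0 < M := hm.trans_le hmM
  set a := (ε * m / M) ^ l
  -- `a ≤ m / M` is what makes `M - m ≤ 2 M (1 - a)`, paying for one extra factor `1 - a`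
  have haM : a * M ≤ m :=
    calc a * M ≤ ε * m / M * M := by
          gcongr
          exact pow_le_of_le_one (by positivity) ((div_le_one hM).2 (by nlinarith [hε₁ hlk])) hl
      _ = ε * m := div_mul_cancel₀ _ hM.ne'
      _ ≤ m := mul_le_of_le_one_left hm.le (hε₁ hlk)
  have ha₀ : 0 ≤ a := by positivity
  have ha₁ : 0 ≤ 1 - a := sub_nonneg.2 (le_of_mul_le_mul_right (by linarith) hM)
  have hkl : (k + 1) / l ≤ k / l + 1 :=
    calc (k + 1) / l ≤ (k + l) / l := Nat.div_le_div_right (by omega)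
      _ = k / l + 1 := Nat.add_div_right k (by omega)
  calc (M - m) / m * (1 - a) ^ (k / l) ≤ 2 * M * (1 - a) / m * (1 - a) ^ (k / l) := by
        gcongr
        linarith
    _ = 2 * (M / m) * (1 - a) ^ (k / l + 1) := by ring
    _ ≤ 2 * (M / m) * (1 - a) ^ ((k + 1) / l) :=
        mul_le_mul_of_nonneg_left (pow_le_pow_of_le_one ha₁ (by linarith) hkl) (by positivity)

theorem abs_sum_Icc_sum_Ioc_le {f : ℕ → ℕ → ℝ} {C : ℝ} {k B : ℕ} (hC : 0 ≤ C) (hB : 2 ≤ B)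
    (hf : ∀ b ∈ Icc 3 B, ∀ t ∈ Ioc ((b - 1) * k) (b * k), |f b t| ≤ C) :
    |∑ b ∈ Icc 3 B, ∑ t ∈ Ioc ((b - 1) * k) (b * k), f b t| ≤ (B * k : ℕ) * C :=
  calc _ ≤ ∑ b ∈ Icc 3 B, ∑ t ∈ Ioc ((b - 1) * k) (b * k), C :=
        (abs_sum_le_sum_abs _ _).trans <| sum_le_sum fun b hb =>
          (abs_sum_le_sum_abs _ _).trans <| sum_le_sum (hf b hb)
    _ = (B * k - 2 * k : ℕ) * C := by
        rw [show Icc 3 B = Ioc 2 B from Icc_add_one_left_eq_Ioc 2 B,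
          ← sum_Ioc_mul_eq_sum_sum_Ioc _ k 2 hB, sum_const, Nat.card_Ioc, nsmul_eq_mul]
    _ ≤ (B * k : ℕ) * C := by gcongr; omega

/-- Under the block-primitivity assumption, setting
`a = (ε·m/M)^l ∈ (0,1)`, the exact and banded log-likelihoods satisfy
`|ℓ_T − ℓ̃_T| ≤ 2 · T · (M/m) · (1 − a)^⌊(k+1)/l⌋`. -/
theorem banded_forward_explicit_bound
    (N l T B k : ℕ) (hN : 1 ≤ N) (hl : 1 ≤ l)
    (hk : 1 ≤ k) (hB : 3 ≤ B) (hT : T = B * k)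
    (ε m M : ℝ) (hε : 0 < ε) (hm : 0 < m) (hmM : m ≤ M)
    (δ ρ : Fin N → ℝ) (hδ : IsProbVec δ) (hρ : IsProbVec ρ)
    (Γ : ℕ → Matrix (Fin N) (Fin N) ℝ)
    (hΓ : ∀ t, 2 ≤ t → t ≤ T → IsRowStochastic (Γ t))
    (w : ℕ → Fin N → ℝ)
    (hw : ∀ t j, 1 ≤ t → t ≤ T → m ≤ w t j ∧ w t j ≤ M)
    (hprim : ∀ t, 2 ≤ t → t + l - 1 ≤ T → ∀ i j, ε ≤ matProd Γ t l i j)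
    (ha : (ε * m / M) ^ l < 1) :
    |loglik δ Γ w T - bandedLoglik δ ρ Γ w k B| ≤
      2 * (T : ℝ) * (M / m) * (1 - (ε * m / M) ^ l) ^ ((k + 1) / l) := by
  subst hT
  have h3k : 3 * k ≤ B * k := Nat.mul_le_mul_right k hB
  have hconst := sub_div_mul_one_sub_pow_le (k := k) (l := l) hε.le hm hmM (by omega) fun hlk =>
    le_one_of_le_matProd (fun s _ => hΓ (2 + s) (by omega) (by omega))
      (hprim 2 le_rfl (by omega) ⟨0, hN⟩ ⟨0, hN⟩)
  have hstep : ∀ b ∈ Icc 3 B, ∀ t ∈ Ioc ((b - 1) * k) (b * k),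
      |Real.log (contrib Γ w (phi δ Γ w (t - 1)) t)
          - Real.log (contrib Γ w (fwdRun Γ w ((b - 2) * k) ρ (t - 1 - (b - 2) * k)) t)|
        ≤ 2 * (M / m) * (1 - (ε * m / M) ^ l) ^ ((k + 1) / l) := by
    intro b hb t ht
    rw [mem_Icc] at hb
    rw [mem_Ioc] at ht
    have hb₁ : (b - 1) * k = (b - 2) * k + k := by rw [← add_one_mul]; congr 1; omega
    have hs : k ≤ (b - 2) * k := Nat.le_mul_of_pos_left k (by omega)
    refine (abs_log_contrib_phi_sub_log_contrib_fwdRun_le (r := k / l) hδ hρ hε hm hmM (by omega)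
      ha.le hΓ hw hprim (by omega) (by have := Nat.div_mul_le_self k l; omega)
      (ht.2.trans (Nat.mul_le_mul_right k hb.2))).trans hconst
  have hM : 0 < M := hm.trans_le hmM
  have ha₁ : 0 ≤ 1 - (ε * m / M) ^ l := by linarith
  rw [loglik_sub_bandedLoglik δ ρ Γ w hk (by omega)]
  refine (abs_sum_Icc_sum_Ioc_le (by positivity) (by omega) hstep).trans_eq ?_
  push_cast
  ring
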